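/- arXiv:1705.03584 — 5 statements merged into one kernel-verified Lean document; each statement's English description precedes it below -/
import Mathlib

section
/- Let z₀, z₁, …, z_n be i.i.d. random variables uniformly distributed on [0,1], and set Z_n = (1/n³)·∑_{k=1}^n k·z_k·∑_{j=0}^{k−1} z_j. Then E[Z_n] = (n+1)(2n+1)/(24n²), so lim_{n→∞} E[Z_n] = 1/12; moreover lim_{n→∞} E[Z_n²] = 1/144, hence lim_{n→∞} Var(Z_n) = 0 and Z_n → 1/12 in L². -/
/-!
Write `Z n = W n / n³` with `W n = ∑_{k=1}^n k z_k S_k` and `S_k = ∑_{j<k} z_j`. By linearity,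
`E[W n]` and `E[(W n)²]` are sums of the moments `E[z_k z_i]` and `E[z_k z_i z_l z_j]` (`i < k`,
`j < l`), which independence reduces to the moments `1/2` and `1/3` of the uniform law. Summing
the resulting polynomials gives `E[W n] = n(n+1)(2n+1)/24` and
`E[(W n)²] = (20n⁶ + 88n⁵ + 125n⁴ + 70n³ + 15n² + 2n)/2880`. Since `20/2880 = (1/12)²`, the
variance of `Z n` tends to `0`, and `E[(Z n - 1/12)²] = Var (Z n) + (E[Z n] - 1/12)² → 0`.
-/

open MeasureTheory ProbabilityTheory Filter Finset
open scoped ENNReal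

section Uniform

variable {Ω : Type*} [MeasurableSpace Ω] {μ : Measure Ω} {X : Ω → ℝ}

lemma integral_pow_of_map_eq_uniform (hX : Measurable X)
    (hunif : μ.map X = volume.restrict (Set.Icc (0 : ℝ) 1)) (m : ℕ) :
    ∫ ω, X ω ^ m ∂μ = 1 / (m + 1) := by
  rw [← integral_map (f := fun x : ℝ => x ^ m) hX.aemeasurable
      (measurable_id.pow_const m).aestronglyMeasurable, hunif, integral_Icc_eq_integral_Ioc,
    ← intervalIntegral.integral_of_le zero_le_one, integral_pow]
  simp

lemma memLp_top_of_map_eq_uniform (hX : Measurable X)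
    (hunif : μ.map X = volume.restrict (Set.Icc (0 : ℝ) 1)) : MemLp X ∞ μ := by
  have hmem : ∀ᵐ ω ∂μ, X ω ∈ Set.Icc (0 : ℝ) 1 :=
    ae_of_ae_map hX.aemeasurable (hunif ▸ ae_restrict_mem measurableSet_Icc)
  refine memLp_top_of_bound hX.aestronglyMeasurable 1 (hmem.mono fun ω hω => ?_)
  rw [Real.norm_eq_abs, abs_le]
  exact ⟨by linarith [hω.1], hω.2⟩

end Uniform

lemma integral_sub_const_sq_eq {Ω : Type*} [MeasurableSpace Ω] {μ : Measure Ω}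
    [IsProbabilityMeasure μ] {X : Ω → ℝ} (hX : MemLp X 2 μ) (c : ℝ) :
    ∫ ω, (X ω - c) ^ 2 ∂μ = Var[X; μ] + (μ[X] - c) ^ 2 := by
  have h := variance_eq_sub (X := fun ω => X ω - c) (hX.sub (memLp_const c))
  rw [← variance_sub_const hX.aestronglyMeasurable c, h,
    integral_sub (hX.integrable one_le_two) (integrable_const c)]
  simp

section MomentLimits

variable {Ω ι : Type*} [MeasurableSpace Ω] {μ : Measure Ω} [IsProbabilityMeasure μ]
  {X : ι → Ω → ℝ} {l : Filter ι} {m : ℝ}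

lemma tendsto_variance_zero_of_tendsto_moments (hX : ∀ n, MemLp (X n) 2 μ)
    (h1 : Tendsto (fun n => μ[X n]) l (nhds m))
    (h2 : Tendsto (fun n => ∫ ω, X n ω ^ 2 ∂μ) l (nhds (m ^ 2))) :
    Tendsto (fun n => Var[X n; μ]) l (nhds 0) := by
  simp only [fun n => variance_eq_sub (hX n), Pi.pow_apply]
  simpa using h2.sub (h1.pow 2)

lemma tendsto_integral_sub_sq_zero_of_tendsto_moments (hX : ∀ n, MemLp (X n) 2 μ)
    (h1 : Tendsto (fun n => μ[X n]) l (nhds m))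
    (h2 : Tendsto (fun n => ∫ ω, X n ω ^ 2 ∂μ) l (nhds (m ^ 2))) :
    Tendsto (fun n => ∫ ω, (X n ω - m) ^ 2 ∂μ) l (nhds 0) := by
  simp only [fun n => integral_sub_const_sq_eq (hX n) m]
  simpa using (tendsto_variance_zero_of_tendsto_moments hX h1 h2).add ((h1.sub_const m).pow 2)

end MomentLimits

lemma tendsto_of_eventually_eq_comp_one_div {a : ℕ → ℝ} {f : ℝ → ℝ} (hf : ContinuousAt f 0)
    (h : ∀ᶠ n in atTop, a n = f (1 / n)) : Tendsto a atTop (nhds (f 0)) :=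
  ((hf.tendsto.comp tendsto_one_div_atTop_nhds_zero_nat).congr' (h.mono fun _ hn => hn.symm))

lemma sum_Icc_sq (n : ℕ) : ∑ k ∈ Icc 1 n, (k : ℝ) ^ 2 = n * (n + 1) * (2 * n + 1) / 6 := by
  induction n with
  | zero => simp
  | succ n ih =>
    rw [sum_Icc_succ_top (by omega), ih]
    push_cast
    ring

lemma sum_Icc_sum_Icc_succ_of_symm {M : Type*} [AddCommMonoid M] (f : ℕ → ℕ → M)
    (hf : ∀ k l, f k l = f l k) (n : ℕ) :
    ∑ k ∈ Icc 1 (n + 1), ∑ l ∈ Icc 1 (n + 1), f k l =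
      ∑ k ∈ Icc 1 n, ∑ l ∈ Icc 1 n, f k l + 2 • ∑ k ∈ Icc 1 n, f k (n + 1) +
        f (n + 1) (n + 1) := by
  simp only [sum_Icc_succ_top (by omega : 1 ≤ n + 1), sum_add_distrib, two_nsmul]
  rw [sum_congr rfl fun l _ => hf (n + 1) l]
  abel

structure IsIidUniform {Ω : Type*} [MeasurableSpace Ω] (z : ℕ → Ω → ℝ) (μ : Measure Ω) :
    Prop where
  measurable : ∀ k, Measurable (z k)
  indep : iIndepFun z μ
  map_eq : ∀ k, μ.map (z k) = volume.restrict (Set.Icc (0 : ℝ) 1)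

/-- `E[z i z j] = (E z)² + δᵢⱼ Var z` for i.i.d. uniform variables on `[0,1]`. -/
noncomputable def pairMoment (i j : ℕ) : ℝ := 1 / 4 + if i = j then 1 / 12 else 0

lemma sum_range_sum_range_pairMoment (k l : ℕ) :
    ∑ i ∈ range k, ∑ j ∈ range l, pairMoment i j = k * l / 4 + min k l / 12 := by
  simp only [pairMoment, sum_add_distrib, sum_const, card_range, nsmul_eq_mul, sum_ite_eq,
    sum_ite_mem, range_inter_range]
  push_cast
  ring

namespace IsIidUniform

variable {Ω : Type*} [MeasurableSpace Ω] {μ : Measure Ω} {z : ℕ → Ω → ℝ}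

lemma memLp_top (hz : IsIidUniform z μ) (k : ℕ) : MemLp (z k) ∞ μ :=
  memLp_top_of_map_eq_uniform (hz.measurable k) (hz.map_eq k)

lemma integral_mul (hz : IsIidUniform z μ) (i j : ℕ) :
    ∫ ω, z i ω * z j ω ∂μ = pairMoment i j := by
  rcases eq_or_ne i j with rfl | hij
  · simp only [← sq, integral_pow_of_map_eq_uniform (hz.measurable i) (hz.map_eq i), pairMoment]
    norm_num
  · rw [(hz.indep.indepFun hij).integral_fun_mul_eq_mul_integral
      (hz.measurable i).aestronglyMeasurable (hz.measurable j).aestronglyMeasurable]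
    have hmean : ∀ k, ∫ ω, z k ω ∂μ = 1 / 2 := fun k => by
      simpa [one_add_one_eq_two] using
        integral_pow_of_map_eq_uniform (hz.measurable k) (hz.map_eq k) 1
    rw [hmean, hmean, pairMoment, if_neg hij]
    norm_num

lemma integral_mul_mul_of_disjoint (hz : IsIidUniform z μ) {a b c d : ℕ}
    (hac : a ≠ c) (had : a ≠ d) (hbc : b ≠ c) (hbd : b ≠ d) :
    ∫ ω, z a ω * z b ω * (z c ω * z d ω) ∂μ = pairMoment a b * pairMoment c d := by
  have hind : IndepFun (fun ω => z a ω * z b ω) (fun ω => z c ω * z d ω) μ :=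
    (hz.indep.indepFun_prodMk_prodMk hz.measurable a b c d hac had hbc hbd).comp
      (measurable_fst.mul measurable_snd) (measurable_fst.mul measurable_snd)
  rw [hind.integral_fun_mul_eq_mul_integral
      ((hz.measurable a).mul (hz.measurable b)).aestronglyMeasurable
      ((hz.measurable c).mul (hz.measurable d)).aestronglyMeasurable,
    hz.integral_mul, hz.integral_mul]

/- The product `pairMoment k l * pairMoment i j` is exact unless `k = j` or `i = l`, where a
coincidence across the two pairs turns `1/16` into `1/12`. -/
lemma integral_mul_mul_of_lt (hz : IsIidUniform z μ) {k i l j : ℕ} (hik : i < k) (hjl : j < l) :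
    ∫ ω, z k ω * z i ω * (z l ω * z j ω) ∂μ = pairMoment k l * pairMoment i j +
      ((if k = j then 1 else 0) + if i = l then 1 else 0) / 48 := by
  by_cases hkj : k = j
  · subst hkj
    have hil : i ≠ l := by omega
    simp only [show ∀ ω, z k ω * z i ω * (z l ω * z k ω) = z k ω * z k ω * (z i ω * z l ω) from
      fun ω => by ring]
    rw [hz.integral_mul_mul_of_disjoint hik.ne' (by omega) hik.ne' (by omega)]
    norm_num [pairMoment, hil, hik.ne, hjl.ne]
  by_cases hil : i = l
  · subst hil
    simp only [show ∀ ω, z k ω * z i ω * (z i ω * z j ω) = z i ω * z i ω * (z k ω * z j ω) from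
      fun ω => by ring]
    rw [hz.integral_mul_mul_of_disjoint hik.ne hjl.ne' hik.ne hjl.ne']
    norm_num [pairMoment, hkj, hik.ne', hjl.ne']
  simp only [show ∀ ω, z k ω * z i ω * (z l ω * z j ω) = z k ω * z l ω * (z i ω * z j ω) from
    fun ω => by ring]
  rw [hz.integral_mul_mul_of_disjoint hik.ne' hkj (Ne.symm hil) (by omega)]
  simp [hkj, hil]

end IsIidUniform

noncomputable def crossMoment (k l : ℕ) : ℝ :=
  pairMoment k l * (k * l / 4 + min k l / 12) +
    ((if k < l then (k : ℝ) else 0) + if l < k then (l : ℝ) else 0) / 48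

lemma crossMoment_comm (k l : ℕ) : crossMoment k l = crossMoment l k := by
  simp only [crossMoment, pairMoment, eq_comm (a := k), min_comm k l]
  ring

lemma crossMoment_of_lt {k l : ℕ} (hkl : k < l) : crossMoment k l = k * l / 16 + k / 24 := by
  simp only [crossMoment, pairMoment, hkl.ne, hkl, not_lt.2 hkl.le, min_eq_left hkl.le,
    ↓reduceIte, add_zero]
  ring

lemma crossMoment_self (k : ℕ) : crossMoment k k = k ^ 2 / 12 + k / 36 := by
  simp only [crossMoment, pairMoment, ↓reduceIte, min_self, lt_self_iff_false, add_zero,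
    zero_div]
  ring

lemma sum_Icc_sum_Icc_mul_crossMoment (n : ℕ) :
    ∑ k ∈ Icc 1 n, ∑ l ∈ Icc 1 n, (k * l : ℝ) * crossMoment k l =
      (20 * n ^ 6 + 88 * n ^ 5 + 125 * n ^ 4 + 70 * n ^ 3 + 15 * n ^ 2 + 2 * n) / 2880 := by
  induction n with
  | zero => simp
  | succ n ih =>
    have hrow : ∑ k ∈ Icc 1 n, (k * (n + 1 : ℕ) : ℝ) * crossMoment k (n + 1) =
        (n + 1) * ((n + 1) / 16 + 1 / 24) * ∑ k ∈ Icc 1 n, (k : ℝ) ^ 2 := by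
      rw [mul_sum]
      refine sum_congr rfl fun k hk => ?_
      rw [crossMoment_of_lt (by simp at hk; omega)]
      push_cast
      ring
    rw [sum_Icc_sum_Icc_succ_of_symm _ (fun k l => by rw [crossMoment_comm, mul_comm (k : ℝ)]),
      ih, hrow, sum_Icc_sq, crossMoment_self]
    push_cast
    ring

section WeightedSum

variable {Ω : Type*} [MeasurableSpace Ω]

def partialSum (z : ℕ → Ω → ℝ) (k : ℕ) (ω : Ω) : ℝ := ∑ j ∈ range k, z j ω

def weightedSum (z : ℕ → Ω → ℝ) (n : ℕ) (ω : Ω) : ℝ :=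
  ∑ k ∈ Icc 1 n, (k : ℝ) * (z k ω * partialSum z k ω)

namespace IsIidUniform

variable {μ : Measure Ω} {z : ℕ → Ω → ℝ}

lemma memLp_top_mul_partialSum (hz : IsIidUniform z μ) (k : ℕ) :
    MemLp (fun ω => z k ω * partialSum z k ω) ∞ μ :=
  (memLp_finsetSum _ fun j _ => hz.memLp_top j).mul' (r := ∞) (hz.memLp_top k)

lemma memLp_top_weightedSum (hz : IsIidUniform z μ) (n : ℕ) : MemLp (weightedSum z n) ∞ μ :=
  memLp_finsetSum _ fun k _ => (hz.memLp_top_mul_partialSum k).const_mul _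

variable [IsProbabilityMeasure μ]

lemma integrable_mul (hz : IsIidUniform z μ) (i j : ℕ) :
    Integrable (fun ω => z i ω * z j ω) μ :=
  ((hz.memLp_top j).mul' (hz.memLp_top i)).integrable le_top

lemma integrable_mul_mul (hz : IsIidUniform z μ) (a b c d : ℕ) :
    Integrable (fun ω => z a ω * z b ω * (z c ω * z d ω)) μ :=
  (((hz.memLp_top d).mul' (r := ∞) (hz.memLp_top c)).mul' (r := ∞)
    ((hz.memLp_top b).mul' (r := ∞) (hz.memLp_top a))).integrable le_top

lemma integral_mul_partialSum (hz : IsIidUniform z μ) (k : ℕ) :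
    ∫ ω, z k ω * partialSum z k ω ∂μ = k / 4 := by
  simp only [partialSum, mul_sum]
  rw [integral_finsetSum _ fun j _ => hz.integrable_mul k j]
  rw [sum_congr rfl fun j hj => (hz.integral_mul k j).trans (by
    rw [pairMoment, if_neg (mem_range.1 hj).ne', add_zero])]
  rw [sum_const, card_range, nsmul_eq_mul]
  ring

lemma integral_mul_partialSum_mul_mul_partialSum (hz : IsIidUniform z μ) (k l : ℕ) :
    ∫ ω, z k ω * partialSum z k ω * (z l ω * partialSum z l ω) ∂μ = crossMoment k l := by
  calc ∫ ω, z k ω * partialSum z k ω * (z l ω * partialSum z l ω) ∂μ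
      = ∑ i ∈ range k, ∑ j ∈ range l, ∫ ω, z k ω * z i ω * (z l ω * z j ω) ∂μ := by
        have hexpand : ∀ ω, z k ω * partialSum z k ω * (z l ω * partialSum z l ω) =
            ∑ i ∈ range k, ∑ j ∈ range l, z k ω * z i ω * (z l ω * z j ω) := fun ω => by
          rw [partialSum, partialSum, mul_sum, mul_sum, sum_mul_sum]
        simp only [hexpand]
        rw [integral_finsetSum _ fun i _ => integrable_finsetSum _ fun j _ =>
          hz.integrable_mul_mul k i l j]
        exact sum_congr rfl fun i _ => integral_finsetSum _ fun j _ =>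
          hz.integrable_mul_mul k i l j
    _ = ∑ i ∈ range k, ∑ j ∈ range l, (pairMoment k l * pairMoment i j +
          ((if k = j then 1 else 0) + if i = l then 1 else 0) / 48) :=
        sum_congr rfl fun i hi => sum_congr rfl fun j hj =>
          hz.integral_mul_mul_of_lt (mem_range.1 hi) (mem_range.1 hj)
    _ = crossMoment k l := by
        simp [sum_add_distrib, ← mul_sum, ← sum_div, sum_ite_eq, sum_ite_eq',
          sum_range_sum_range_pairMoment, crossMoment]

lemma integral_weightedSum (hz : IsIidUniform z μ) (n : ℕ) :
    ∫ ω, weightedSum z n ω ∂μ = n * (n + 1) * (2 * n + 1) / 24 := by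
  simp only [weightedSum]
  rw [integral_finsetSum _ fun k _ =>
    ((hz.memLp_top_mul_partialSum k).const_mul _).integrable le_top]
  simp only [integral_const_mul, hz.integral_mul_partialSum, mul_div, ← sq, ← sum_div,
    sum_Icc_sq]
  ring

lemma integral_weightedSum_sq (hz : IsIidUniform z μ) (n : ℕ) :
    ∫ ω, weightedSum z n ω ^ 2 ∂μ =
      (20 * n ^ 6 + 88 * n ^ 5 + 125 * n ^ 4 + 70 * n ^ 3 + 15 * n ^ 2 + 2 * n) / 2880 := by
  have hexpand : ∀ ω, weightedSum z n ω ^ 2 = ∑ k ∈ Icc 1 n, ∑ l ∈ Icc 1 n,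
      (k * l : ℝ) * (z k ω * partialSum z k ω * (z l ω * partialSum z l ω)) := fun ω => by
    rw [weightedSum, sq, sum_mul_sum]
    exact sum_congr rfl fun k _ => sum_congr rfl fun l _ => by ring
  have hint : ∀ k l : ℕ, Integrable
      (fun ω => (k * l : ℝ) * (z k ω * partialSum z k ω * (z l ω * partialSum z l ω))) μ :=
    fun k l => (((hz.memLp_top_mul_partialSum l).mul' (r := ∞)
      (hz.memLp_top_mul_partialSum k)).integrable le_top).const_mul _
  simp only [hexpand]
  rw [integral_finsetSum _ fun k _ => integrable_finsetSum _ fun l _ => hint k l]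
  simp only [integral_finsetSum _ fun l _ => hint _ l, integral_const_mul,
    hz.integral_mul_partialSum_mul_mul_partialSum]
  exact sum_Icc_sum_Icc_mul_crossMoment n

end IsIidUniform

end WeightedSum


section ScaledWeightedSum

variable {Ω : Type*} [MeasurableSpace Ω] {μ : Measure Ω} [IsProbabilityMeasure μ]
  {z : ℕ → Ω → ℝ}

noncomputable def scaledWeightedSum (z : ℕ → Ω → ℝ) (n : ℕ) (ω : Ω) : ℝ :=
  1 / (n : ℝ) ^ 3 * weightedSum z n ω

namespace IsIidUniform

lemma memLp_two_scaledWeightedSum (hz : IsIidUniform z μ) (n : ℕ) :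
    MemLp (scaledWeightedSum z n) 2 μ :=
  ((hz.memLp_top_weightedSum n).const_mul _).mono_exponent le_top

lemma integral_scaledWeightedSum (hz : IsIidUniform z μ) {n : ℕ} (hn : 1 ≤ n) :
    ∫ ω, scaledWeightedSum z n ω ∂μ = ((n : ℝ) + 1) * (2 * n + 1) / (24 * (n : ℝ) ^ 2) := by
  have : (n : ℝ) ≠ 0 := by positivity
  simp only [scaledWeightedSum, integral_const_mul, hz.integral_weightedSum]
  field_simp

lemma tendsto_integral_scaledWeightedSum (hz : IsIidUniform z μ) :
    Tendsto (fun n => ∫ ω, scaledWeightedSum z n ω ∂μ) atTop (nhds (1 / 12)) := by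
  convert tendsto_of_eventually_eq_comp_one_div (f := fun x => (1 + x) * (2 + x) / 24)
    (by fun_prop) ((eventually_ge_atTop 1).mono fun n hn => ?_) using 2
  · norm_num
  · have : (n : ℝ) ≠ 0 := by positivity
    rw [hz.integral_scaledWeightedSum hn]
    field_simp

lemma tendsto_integral_scaledWeightedSum_sq (hz : IsIidUniform z μ) :
    Tendsto (fun n => ∫ ω, scaledWeightedSum z n ω ^ 2 ∂μ) atTop (nhds ((1 / 12) ^ 2)) := by
  convert tendsto_of_eventually_eq_comp_one_div
    (f := fun x => (20 + 88 * x + 125 * x ^ 2 + 70 * x ^ 3 + 15 * x ^ 4 + 2 * x ^ 5) / 2880)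
    (by fun_prop) ((eventually_ge_atTop 1).mono fun n hn => ?_) using 2
  · norm_num
  · have : (n : ℝ) ≠ 0 := by positivity
    simp only [scaledWeightedSum, mul_pow, integral_const_mul, hz.integral_weightedSum_sq]
    field_simp

end IsIidUniform

end ScaledWeightedSum

/-- Theorem 4.2: with `(z k)_{k ≥ 0}` i.i.d. uniform on `[0,1]` and
`Z n = (1/n³) ∑_{k=1}^n k z_k ∑_{j=0}^{k-1} z_j`:
`E[Z n] = (n+1)(2n+1)/(24n²)`, so `E[Z n] → 1/12`; moreover `E[Z n ^ 2] → 1/144`,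
hence `Var (Z n) → 0` and `Z n → 1/12` in `L²`. -/
theorem stmt8 {Ω : Type*} [MeasureSpace Ω] [IsProbabilityMeasure (ℙ : Measure Ω)]
    (z : ℕ → Ω → ℝ) (hmeas : ∀ k, Measurable (z k))
    (hindep : iIndepFun z ℙ)
    (hunif : ∀ k, Measure.map (z k) ℙ = volume.restrict (Set.Icc (0 : ℝ) 1))
    (Z : ℕ → Ω → ℝ)
    (hZ : ∀ n ω, Z n ω = (1 / (n : ℝ) ^ 3) *
      ∑ k ∈ Finset.Icc 1 n, (k : ℝ) * z k ω * ∑ j ∈ Finset.range k, z j ω) :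
    (∀ n, 1 ≤ n →
      (∫ ω, Z n ω ∂ℙ) = ((n : ℝ) + 1) * (2 * n + 1) / (24 * (n : ℝ) ^ 2)) ∧
    Tendsto (fun n => ∫ ω, Z n ω ∂ℙ) atTop (nhds (1 / 12)) ∧
    Tendsto (fun n => ∫ ω, (Z n ω) ^ 2 ∂ℙ) atTop (nhds (1 / 144)) ∧
    Tendsto (fun n => variance (Z n) ℙ) atTop (nhds 0) ∧
    Tendsto (fun n => ∫ ω, (Z n ω - 1 / 12) ^ 2 ∂ℙ) atTop (nhds 0) := by
  have hz : IsIidUniform z ℙ := ⟨hmeas, hindep, hunif⟩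
  obtain rfl : Z = scaledWeightedSum z := funext₂ fun n ω => by
    simp only [hZ, scaledWeightedSum, weightedSum, partialSum, mul_assoc]
  have hL2 := hz.memLp_two_scaledWeightedSum
  have hmean := hz.tendsto_integral_scaledWeightedSum
  have hsecond := hz.tendsto_integral_scaledWeightedSum_sq
  refine ⟨fun n hn => hz.integral_scaledWeightedSum hn, hmean, by convert hsecond using 2; norm_num,
    tendsto_variance_zero_of_tendsto_moments hL2 hmean hsecond,
    tendsto_integral_sub_sq_zero_of_tendsto_moments hL2 hmean hsecond⟩
end

section
/- Fix an integer n ≥ 3 and a real s > 0, and let a : [0,1] → ℝ be continuous. Let (x₁,…,x_{n−1}) be uniformly distributed on Δ_{ns} = {x ∈ ℝ^{n−1} : x_i ≥ 0, ∑ x_i ≤ ns}, set x_n = ns − ∑_{i=1}^{n−1} x_i, write a_k = a(k/n), and define Y_n = (1/n)·∑_{k=1}^n a_k x_k. Then E[Y_n] = (s/n)·∑_{k=1}^n a_k and E[Y_n²] = (s²/(n(n+1)))·( (∑_{k=1}^n a_k)² + ∑_{k=1}^n a_k² ). Consequently lim_{n→∞} E[Y_n] = s·∫_0^1 a(t)dt,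 lim_{n→∞} E[Y_n²] = (s·∫_0^1 a(t)dt)², and lim_{n→∞} Var(Y_n) = 0. -/
open MeasureTheory ProbabilityTheory Filter

/-- The scaled corner simplex `{x ∈ ℝ^m : xᵢ ≥ 0, ∑ xᵢ ≤ h}`. -/
def scaledCornerSimplex (m : ℕ) (h : ℝ) : Set (Fin m → ℝ) :=
  {x | (∀ i, 0 ≤ x i) ∧ ∑ i, x i ≤ h}

/-- The uniform probability measure (normalized Lebesgue measure) on the scaled
corner simplex. -/
noncomputable def scaledCornerSimplexUnif (m : ℕ) (h : ℝ) : Measure (Fin m → ℝ) :=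
  (volume (scaledCornerSimplex m h))⁻¹ • volume.restrict (scaledCornerSimplex m h)

/-- `Y n x = (1/n) ∑_{k=1}^n a(k/n) x_k` where `x₁, …, x_{n-1}` are the coordinates
of `x` and `x_n = ns - ∑_{i=1}^{n-1} xᵢ`. -/
noncomputable def simplexYa (a : ℝ → ℝ) (s : ℝ) (n : ℕ) (x : Fin (n - 1) → ℝ) : ℝ :=
  (1 / (n : ℝ)) *
    ((∑ i : Fin (n - 1), a (((i : ℕ) + 1 : ℝ) / n) * x i) +
      a ((n : ℝ) / n) * ((n : ℝ) * s - ∑ i, x i))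

/-! The moments of `Y_n` come from the Dirichlet integrals
`∫_{Δ_m(h)} ∏ xᵢ ^ kᵢ = ∏ kᵢ! / (m + ∑ kᵢ)! * h ^ (m + ∑ kᵢ)`, obtained by slicing off the
first coordinate and applying the Beta integral
`∫₀ʰ t^p (h - t)^q = p! q! / (p + q + 1)! * h^(p + q + 1)`.
Under the uniform law they give `E[xᵢ] = h / (m + 1)` and
`E[xᵢ xⱼ] = (1 + δᵢⱼ) h² / ((m + 1)(m + 2))`; eliminating the slack coordinate `x_n = h - ∑ xᵢ`
yields the closed forms for `E[Y_n]` and `E[Y_n²]`. These are right-endpoint Riemann sums of `a`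
and `a²` times factors tending to `s`, `s²` and `0`, so `E[Y_n²]` and `E[Y_n]²` share the limit
`(s ∫ a)²` and the variance tends to `0`. -/

open scoped Nat

lemma integral_pow_mul_sub_pow (h : ℝ) (p q : ℕ) :
    ∫ t in (0 : ℝ)..h, t ^ p * (h - t) ^ q = (p ! * q ! / (p + q + 1)! : ℝ) * h ^ (p + q + 1) := by
  induction q generalizing p with
  | zero =>
    simp only [pow_zero, mul_one, integral_pow, add_zero, Nat.factorial_succ]
    push_cast
    field_simp
    ring
  | succ q ih =>
    have hsplit (t : ℝ) :
        t ^ p * (h - t) ^ (q + 1) = h * (t ^ p * (h - t) ^ q) - t ^ (p + 1) * (h - t) ^ q := by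
      ring
    simp_rw [hsplit]
    rw [intervalIntegral.integral_sub (Continuous.intervalIntegrable (by fun_prop) _ _)
      (Continuous.intervalIntegrable (by fun_prop) _ _), intervalIntegral.integral_const_mul, ih,
      ih, show p + 1 + q + 1 = p + (q + 1) + 1 by ring, show p + q + 1 = p + (q + 1) by ring]
    push_cast [Nat.factorial_succ]
    field_simp
    ring

lemma Finset.sum_sum_mul_ite_two_one {ι R : Type*} [Fintype ι] [DecidableEq ι] [CommRing R]
    (c : ι → R) :
    ∑ i, ∑ j, c i * c j * (if i = j then 2 else 1) = (∑ i, c i) ^ 2 + ∑ i, c i ^ 2 := by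
  have hsplit (i j : ι) : c i * c j * (if i = j then 2 else 1) =
      c i * c j + if i = j then c i ^ 2 else 0 := by
    split_ifs with hij
    · subst hij; ring
    · ring
  simp only [hsplit, Finset.sum_add_distrib, Finset.sum_ite_eq, Finset.mem_univ, if_true, sq,
    Finset.sum_mul_sum]

lemma Finset.sum_Icc_one_eq_sum_fin {M : Type*} [AddCommMonoid M] (f : ℕ → M) (n : ℕ) :
    ∑ k ∈ Finset.Icc 1 n, f k = ∑ i : Fin n, f (i + 1) := by
  rw [Fin.sum_univ_eq_sum_range (fun i => f (i + 1)), Finset.range_eq_Ico, Finset.sum_Ico_add']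
  rfl

lemma abs_intervalIntegral_sub_mul_le {f : ℝ → ℝ} {u v c ε : ℝ} (huv : u ≤ v)
    (hf : IntervalIntegrable f volume u v) (hfc : ∀ t ∈ Set.Ioc u v, |f t - c| ≤ ε) :
    |(∫ t in u..v, f t) - (v - u) * c| ≤ ε * (v - u) := by
  have hbound := intervalIntegral.norm_integral_le_of_norm_le_const (f := fun t => f t - c)
    (by rwa [Set.uIoc_of_le huv])
  rwa [intervalIntegral.integral_sub hf intervalIntegrable_const, intervalIntegral.integral_const,
    smul_eq_mul, abs_of_nonneg (sub_nonneg.2 huv), Real.norm_eq_abs] at hbound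

lemma abs_riemannSum_sub_integral_le {a : ℝ → ℝ} (ha : ContinuousOn a (Set.Icc 0 1)) {n : ℕ}
    (hn : 0 < n) {ε : ℝ} (hmod : ∀ x ∈ Set.Icc (0 : ℝ) 1, ∀ y ∈ Set.Icc (0 : ℝ) 1,
      dist x y ≤ 1 / n → dist (a x) (a y) ≤ ε) :
    |1 / (n : ℝ) * ∑ k ∈ Finset.Icc 1 n, a (k / n) - ∫ t in (0 : ℝ)..1, a t| ≤ ε := by
  have hn0 : (0 : ℝ) < n := by exact_mod_cast hn
  have hnode {i : ℕ} (hi : i ≤ n) : (i : ℝ) / n ∈ Set.Icc (0 : ℝ) 1 :=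
    ⟨by positivity, (div_le_one hn0).2 (by exact_mod_cast hi)⟩
  have hcellInt {i : ℕ} (hi : i + 1 ≤ n) :
      IntervalIntegrable a volume (i / n) ((i + 1 : ℕ) / n) :=
    (ha.mono (Set.Icc_subset_Icc (hnode (by omega)).1 (hnode hi).2)).intervalIntegrable_of_Icc
      (div_le_div_of_nonneg_right (by simp) hn0.le)
  have hcell (i : ℕ) (hi : i ∈ Finset.range n) :
      |1 / n * a ((i + 1 : ℕ) / n) - ∫ t in (i / n : ℝ)..((i + 1 : ℕ) / n), a t| ≤
        ε * (1 / n) := by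
    have hi : i + 1 ≤ n := Finset.mem_range.1 hi
    have hstep : ((i + 1 : ℕ) : ℝ) / n - i / n = 1 / n := by push_cast; ring
    have hle : (i : ℝ) / n ≤ (i + 1 : ℕ) / n := by linarith [one_div_pos.2 hn0]
    rw [abs_sub_comm, ← hstep]
    refine abs_intervalIntegral_sub_mul_le hle (hcellInt hi) fun t ht => ?_
    refine hmod t ⟨(hnode (by omega)).1.trans ht.1.le, ht.2.trans (hnode hi).2⟩ _ (hnode hi) ?_
    rw [Real.dist_eq, abs_of_nonpos (by linarith [ht.2])]
    linarith [ht.1]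
  have hsplit : ∫ t in (0 : ℝ)..1, a t =
      ∑ i ∈ Finset.range n, ∫ t in (i / n : ℝ)..((i + 1 : ℕ) / n), a t := by
    rw [intervalIntegral.sum_integral_adjacent_intervals (a := fun i : ℕ => (i : ℝ) / n)]
    · simp [hn0.ne']
    · exact fun k hk => hcellInt hk
  rw [hsplit, Finset.sum_Icc_one_eq_sum_fin,
    Fin.sum_univ_eq_sum_range (fun i => a ((i + 1 : ℕ) / n)), Finset.mul_sum,
    ← Finset.sum_sub_distrib]
  calc _ ≤ ∑ i ∈ Finset.range n, ε * (1 / n) :=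
        (Finset.abs_sum_le_sum_abs _ _).trans (Finset.sum_le_sum hcell)
    _ = ε := by
        rw [Finset.sum_const, Finset.card_range, nsmul_eq_mul]
        field_simp

theorem tendsto_riemannSum_Icc_one {a : ℝ → ℝ} (ha : ContinuousOn a (Set.Icc 0 1)) :
    Tendsto (fun n : ℕ => 1 / (n : ℝ) * ∑ k ∈ Finset.Icc 1 n, a (k / n)) atTop
      (nhds (∫ t in (0 : ℝ)..1, a t)) := by
  rw [Metric.tendsto_atTop]
  intro ε hε
  obtain ⟨δ, hδ, hδa⟩ := Metric.uniformContinuousOn_iff_le.1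
    (isCompact_Icc.uniformContinuousOn_of_continuous ha) (ε / 2) (half_pos hε)
  obtain ⟨N, hN⟩ := exists_nat_one_div_lt hδ
  refine ⟨N + 1, fun n hn => ?_⟩
  have hmesh : 1 / (n : ℝ) ≤ δ :=
    (one_div_le_one_div_of_le (by positivity) (by exact_mod_cast hn)).trans hN.le
  rw [Real.dist_eq]
  exact (abs_riemannSum_sub_integral_le ha (by omega) fun x hx y hy hxy =>
    hδa x hx y hy (hxy.trans hmesh)).trans_lt (half_lt_self hε)

section ScaledCornerSimplex

variable {m : ℕ} {h : ℝ}

lemma isCompact_scaledCornerSimplex : IsCompact (scaledCornerSimplex m h) := by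
  refine Metric.isCompact_of_isClosed_isBounded ?_
    ((Metric.isBounded_Icc (0 : Fin m → ℝ) fun _ => h).subset ?_)
  · simp only [scaledCornerSimplex, Set.ofPred_and, Set.ofPred_forall]
    exact (isClosed_iInter fun i => isClosed_le continuous_const (continuous_apply i)).inter
      (isClosed_le (by fun_prop) continuous_const)
  · rintro x ⟨hx0, hxh⟩
    exact ⟨hx0, fun i => (Finset.single_le_sum (fun j _ => hx0 j) (Finset.mem_univ i)).trans hxh⟩

lemma measurableSet_scaledCornerSimplex : MeasurableSet (scaledCornerSimplex m h) :=
  isCompact_scaledCornerSimplex.isClosed.measurableSet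

lemma Continuous.integrableOn_scaledCornerSimplex {F : (Fin m → ℝ) → ℝ} (hF : Continuous F) :
    IntegrableOn F (scaledCornerSimplex m h) :=
  hF.continuousOn.integrableOn_compact isCompact_scaledCornerSimplex

lemma scaledCornerSimplex_eq_empty (hh : h < 0) : scaledCornerSimplex m h = ∅ :=
  Set.eq_empty_of_forall_notMem fun _ ⟨hx0, hxh⟩ =>
    hh.not_ge ((Finset.sum_nonneg fun i _ => hx0 i).trans hxh)

lemma scaledCornerSimplex_zero (hh : 0 ≤ h) : scaledCornerSimplex 0 h = Set.univ := by
  ext x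
  simp [scaledCornerSimplex, hh]

lemma Fin.cons_mem_scaledCornerSimplex_iff {t : ℝ} {y : Fin m → ℝ} :
    Fin.cons t y ∈ scaledCornerSimplex (m + 1) h ↔ 0 ≤ t ∧ y ∈ scaledCornerSimplex m (h - t) := by
  simp only [scaledCornerSimplex, Set.mem_ofPred_eq, Fin.forall_fin_succ, Fin.cons_zero,
    Fin.cons_succ, Fin.sum_cons]
  constructor
  · rintro ⟨⟨ht, hy⟩, hsum⟩
    exact ⟨ht, hy, by linarith⟩
  · rintro ⟨ht, hy, hsum⟩
    exact ⟨⟨ht, hy⟩, by linarith⟩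

lemma indicator_scaledCornerSimplex_cons (F : (Fin (m + 1) → ℝ) → ℝ) (t : ℝ) (y : Fin m → ℝ) :
    (scaledCornerSimplex (m + 1) h).indicator F (Fin.cons t y) =
      if 0 ≤ t then (scaledCornerSimplex m (h - t)).indicator (fun y => F (Fin.cons t y)) y
      else 0 := by
  by_cases hy : Fin.cons t y ∈ scaledCornerSimplex (m + 1) h
  · obtain ⟨ht, hy'⟩ := Fin.cons_mem_scaledCornerSimplex_iff.1 hy
    rw [if_pos ht, Set.indicator_of_mem hy, Set.indicator_of_mem hy']
  · rw [Set.indicator_of_notMem hy]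
    split_ifs with ht
    · exact (Set.indicator_of_notMem
        (fun hy' => hy (Fin.cons_mem_scaledCornerSimplex_iff.2 ⟨ht, hy'⟩)) _).symm
    · rfl

lemma integral_indicator_scaledCornerSimplex_cons (F : (Fin (m + 1) → ℝ) → ℝ) (t : ℝ) :
    ∫ y, (scaledCornerSimplex (m + 1) h).indicator F (Fin.cons t y) =
      (Set.Icc 0 h).indicator
        (fun t => ∫ y in scaledCornerSimplex m (h - t), F (Fin.cons t y)) t := by
  simp only [indicator_scaledCornerSimplex_cons]
  by_cases ht : 0 ≤ t
  · simp only [ht, if_true, integral_indicator measurableSet_scaledCornerSimplex]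
    by_cases hth : t ≤ h
    · rw [Set.indicator_of_mem (Set.mem_Icc.2 ⟨ht, hth⟩)]
    · rw [Set.indicator_of_notMem (fun ht' => hth ht'.2),
        scaledCornerSimplex_eq_empty (by linarith), Measure.restrict_empty, integral_zero_measure]
  · simp only [ht, if_false, integral_zero]
    rw [Set.indicator_of_notMem (fun ht' => ht ht'.1)]

lemma setIntegral_scaledCornerSimplex_succ (hh : 0 ≤ h) {F : (Fin (m + 1) → ℝ) → ℝ}
    (hF : Continuous F) :
    ∫ x in scaledCornerSimplex (m + 1) h, F x =
      ∫ t in (0 : ℝ)..h, ∫ y in scaledCornerSimplex m (h - t), F (Fin.cons t y) := by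
  have hcons := (volume_preserving_piFinSuccAbove (fun _ : Fin (m + 1) => ℝ) 0).symm
  have hcons_apply (z : ℝ × (Fin m → ℝ)) :
      (MeasurableEquiv.piFinSuccAbove (fun _ => ℝ) 0).symm z = Fin.cons z.1 z.2 := by
    simp [MeasurableEquiv.piFinSuccAbove_symm_apply, Fin.insertNthEquiv]
  have hint : Integrable fun z : ℝ × (Fin m → ℝ) =>
      (scaledCornerSimplex (m + 1) h).indicator F (Fin.cons z.1 z.2) := by
    refine ((hcons.integrable_comp_emb (MeasurableEquiv.measurableEmbedding _)).2
      ((integrable_indicator_iff measurableSet_scaledCornerSimplex).2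
        (hF.integrableOn_scaledCornerSimplex (h := h)))).congr (ae_of_all _ fun z => ?_)
    simp only [Function.comp_apply, hcons_apply]
  calc ∫ x in scaledCornerSimplex (m + 1) h, F x
      = ∫ z : ℝ × (Fin m → ℝ), (scaledCornerSimplex (m + 1) h).indicator F (Fin.cons z.1 z.2) := by
        rw [← integral_indicator measurableSet_scaledCornerSimplex, ← hcons.integral_comp']
        simp only [hcons_apply]
    _ = ∫ t in Set.Icc 0 h, ∫ y in scaledCornerSimplex m (h - t), F (Fin.cons t y) := by
        rw [Measure.volume_eq_prod, integral_prod _ hint, ← integral_indicator measurableSet_Icc]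
        simp only [integral_indicator_scaledCornerSimplex_cons]
    _ = _ := by rw [intervalIntegral.integral_of_le hh, integral_Icc_eq_integral_Ioc]

theorem setIntegral_scaledCornerSimplex_prod_pow (hh : 0 ≤ h) (k : Fin m → ℕ) :
    ∫ x in scaledCornerSimplex m h, ∏ i, x i ^ k i =
      (∏ i, (k i)! : ℝ) / (m + ∑ i, k i)! * h ^ (m + ∑ i, k i) := by
  induction m generalizing h with
  | zero => simp [scaledCornerSimplex_zero hh, measureReal_def, volume_pi]
  | succ m ih =>
    set N := m + ∑ i, k (Fin.succ i)
    have hslice : Set.EqOn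
        (fun t => ∫ y in scaledCornerSimplex m (h - t),
          ∏ i, (Fin.cons t y : Fin (m + 1) → ℝ) i ^ k i)
        (fun t => (∏ i, (k (Fin.succ i))! : ℝ) / N ! * (t ^ k 0 * (h - t) ^ N)) (Set.uIcc 0 h) := by
      intro t ht
      rw [Set.uIcc_of_le hh] at ht
      simp only [Fin.prod_univ_succ, Fin.cons_zero, Fin.cons_succ]
      rw [integral_const_mul, ih (sub_nonneg.2 ht.2)]
      ring
    rw [setIntegral_scaledCornerSimplex_succ hh (by fun_prop),
      intervalIntegral.integral_congr hslice, intervalIntegral.integral_const_mul,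
      integral_pow_mul_sub_pow, Fin.prod_univ_succ,
      Fin.sum_univ_succ, show m + 1 + (k 0 + ∑ i, k (Fin.succ i)) = k 0 + N + 1 by omega]
    field_simp

lemma volume_real_scaledCornerSimplex (hh : 0 ≤ h) :
    volume.real (scaledCornerSimplex m h) = h ^ m / m ! := by
  rw [div_eq_inv_mul]
  simpa using setIntegral_scaledCornerSimplex_prod_pow (m := m) hh 0

lemma setIntegral_scaledCornerSimplex_pow (hh : 0 ≤ h) (i : Fin m) (p : ℕ) :
    ∫ x in scaledCornerSimplex m h, x i ^ p = (p ! / (m + p)! : ℝ) * h ^ (m + p) := by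
  simpa [Pi.single_apply, apply_ite Nat.factorial] using
    setIntegral_scaledCornerSimplex_prod_pow hh (Pi.single i p)

lemma setIntegral_scaledCornerSimplex_mul (hh : 0 ≤ h) {i j : Fin m} (hij : i ≠ j) :
    ∫ x in scaledCornerSimplex m h, x i * x j = h ^ (m + 2) / (m + 2)! := by
  have hfact : ∏ l, (((Pi.single i 1 + Pi.single j 1 : Fin m → ℕ) l)! : ℝ) = 1 :=
    Finset.prod_eq_one fun l _ => by
      by_cases hi : l = i <;> by_cases hj : l = j <;> simp_all
  have hsum : ∑ l, (Pi.single i 1 + Pi.single j 1 : Fin m → ℕ) l = 2 := by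
    simp [Pi.single_apply, Finset.sum_add_distrib]
  have := setIntegral_scaledCornerSimplex_prod_pow hh (Pi.single i 1 + Pi.single j 1)
  rw [hfact, hsum] at this
  simpa only [Pi.add_apply, pow_add, Finset.prod_mul_distrib, Pi.single_apply, pow_ite, pow_one,
    pow_zero, Finset.prod_ite_eq', Finset.mem_univ, if_true, Nat.cast_one, one_div_mul_eq_div]
    using this

lemma integral_scaledCornerSimplexUnif (f : (Fin m → ℝ) → ℝ) :
    ∫ x, f x ∂scaledCornerSimplexUnif m h =
      (volume.real (scaledCornerSimplex m h))⁻¹ * ∫ x in scaledCornerSimplex m h, f x := by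
  rw [scaledCornerSimplexUnif, integral_smul_measure, smul_eq_mul, ENNReal.toReal_inv,
    measureReal_def]

lemma volume_scaledCornerSimplex_ne_zero (hh : 0 < h) : volume (scaledCornerSimplex m h) ≠ 0 := by
  intro h0
  have := volume_real_scaledCornerSimplex (m := m) hh.le
  rw [measureReal_def, h0, ENNReal.toReal_zero] at this
  exact (by positivity : (0 : ℝ) < h ^ m / m !).ne this

lemma isProbabilityMeasure_scaledCornerSimplexUnif (hh : 0 < h) :
    IsProbabilityMeasure (scaledCornerSimplexUnif m h) := by
  constructor
  rw [scaledCornerSimplexUnif, Measure.smul_apply, Measure.restrict_apply_univ, smul_eq_mul]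
  exact ENNReal.inv_mul_cancel (volume_scaledCornerSimplex_ne_zero hh)
    isCompact_scaledCornerSimplex.measure_lt_top.ne

lemma Continuous.integrable_scaledCornerSimplexUnif (hh : 0 < h) {F : (Fin m → ℝ) → ℝ}
    (hF : Continuous F) : Integrable F (scaledCornerSimplexUnif m h) :=
  hF.integrableOn_scaledCornerSimplex.smul_measure
    (ENNReal.inv_ne_top.2 (volume_scaledCornerSimplex_ne_zero hh))

lemma integral_scaledCornerSimplexUnif_apply (hh : 0 < h) (i : Fin m) :
    ∫ x, x i ∂scaledCornerSimplexUnif m h = h / (m + 1) := by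
  rw [integral_scaledCornerSimplexUnif, volume_real_scaledCornerSimplex hh.le]
  have hmoment := setIntegral_scaledCornerSimplex_pow hh.le i 1
  simp only [pow_one] at hmoment
  rw [hmoment]
  push_cast [Nat.factorial_succ]
  field_simp
  ring

lemma integral_scaledCornerSimplexUnif_mul (hh : 0 < h) (i j : Fin m) :
    ∫ x, x i * x j ∂scaledCornerSimplexUnif m h =
      (if i = j then 2 else 1) * (h ^ 2 / ((m + 1) * (m + 2))) := by
  rw [integral_scaledCornerSimplexUnif, volume_real_scaledCornerSimplex hh.le]
  split_ifs with hij
  · subst hij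
    simp only [← sq, setIntegral_scaledCornerSimplex_pow hh.le]
    push_cast [Nat.factorial_succ]
    field_simp
    ring
  · rw [setIntegral_scaledCornerSimplex_mul hh.le hij]
    push_cast [Nat.factorial_succ]
    field_simp
    ring

lemma integral_scaledCornerSimplexUnif_linear (hh : 0 < h) (c : Fin m → ℝ) (K : ℝ) :
    ∫ x, (∑ i, c i * x i + K) ∂scaledCornerSimplexUnif m h = (∑ i, c i) * (h / (m + 1)) + K := by
  have := isProbabilityMeasure_scaledCornerSimplexUnif (m := m) hh
  have hint {F : (Fin m → ℝ) → ℝ} (hF : Continuous F) := hF.integrable_scaledCornerSimplexUnif hh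
  rw [integral_add (hint (by fun_prop)) (integrable_const K),
    integral_finsetSum _ fun i _ => hint (by fun_prop)]
  simp only [integral_const_mul, integral_scaledCornerSimplexUnif_apply hh, integral_const,
    probReal_univ, one_smul, Finset.sum_mul]

lemma integral_scaledCornerSimplexUnif_linear_sq (hh : 0 < h) (c : Fin m → ℝ) (K : ℝ) :
    ∫ x, (∑ i, c i * x i + K) ^ 2 ∂scaledCornerSimplexUnif m h =
      ((∑ i, c i) ^ 2 + ∑ i, c i ^ 2) * (h ^ 2 / ((m + 1) * (m + 2))) +
        2 * K * (∑ i, c i) * (h / (m + 1)) + K ^ 2 := by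
  have := isProbabilityMeasure_scaledCornerSimplexUnif (m := m) hh
  have hint {F : (Fin m → ℝ) → ℝ} (hF : Continuous F) := hF.integrable_scaledCornerSimplexUnif hh
  have hexpand (x : Fin m → ℝ) : (∑ i, c i * x i + K) ^ 2 =
      ∑ i, ∑ j, c i * c j * (x i * x j) + (∑ i, 2 * K * c i * x i + K ^ 2) := by
    rw [add_sq, sq, Finset.sum_mul_sum, Finset.mul_sum, Finset.sum_mul, add_assoc]
    congr 1
    · exact Finset.sum_congr rfl fun i _ => Finset.sum_congr rfl fun j _ => by ring
    · congr 1
      exact Finset.sum_congr rfl fun i _ => by ring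
  simp only [hexpand]
  rw [integral_add (hint (by fun_prop)) (hint (by fun_prop)),
    integral_add (hint (by fun_prop)) (integrable_const _),
    integral_finsetSum _ fun i _ => hint (by fun_prop),
    integral_finsetSum _ fun i _ => hint (by fun_prop)]
  have hinner (i : Fin m) : ∫ x, ∑ j, c i * c j * (x i * x j) ∂scaledCornerSimplexUnif m h =
      ∑ j, c i * c j * (if i = j then 2 else 1) * (h ^ 2 / ((m + 1) * (m + 2))) := by
    rw [integral_finsetSum _ fun j _ => hint (by fun_prop)]
    simp only [integral_const_mul, integral_scaledCornerSimplexUnif_mul hh, mul_assoc]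
  simp only [hinner, integral_const_mul, integral_scaledCornerSimplexUnif_apply hh,
    integral_const, probReal_univ, one_smul, ← Finset.sum_mul, ← Finset.mul_sum,
    Finset.sum_sum_mul_ite_two_one]
  ring

lemma sum_mul_snoc_sub_sum (b : Fin (m + 1) → ℝ) (x : Fin m → ℝ) :
    ∑ k, b k * (Fin.snoc x (h - ∑ i, x i) : Fin (m + 1) → ℝ) k =
      ∑ i, (b i.castSucc - b (Fin.last m)) * x i + b (Fin.last m) * h := by
  rw [Fin.sum_univ_castSucc]
  simp only [Fin.snoc_castSucc, Fin.snoc_last, sub_mul, Finset.sum_sub_distrib, ← Finset.mul_sum]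
  ring

lemma integral_scaledCornerSimplexUnif_sum_mul_snoc (hh : 0 < h) (b : Fin (m + 1) → ℝ) :
    ∫ x, ∑ k, b k * (Fin.snoc x (h - ∑ i, x i) : Fin (m + 1) → ℝ) k ∂scaledCornerSimplexUnif m h =
      h / (m + 1) * ∑ k, b k := by
  simp only [sum_mul_snoc_sub_sum, integral_scaledCornerSimplexUnif_linear hh,
    Fin.sum_univ_castSucc b, Finset.sum_sub_distrib, Finset.sum_const, Finset.card_univ,
    Fintype.card_fin, nsmul_eq_mul]
  field_simp
  ring

lemma integral_scaledCornerSimplexUnif_sum_mul_snoc_sq (hh : 0 < h) (b : Fin (m + 1) → ℝ) :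
    ∫ x, (∑ k, b k * (Fin.snoc x (h - ∑ i, x i) : Fin (m + 1) → ℝ) k) ^ 2
        ∂scaledCornerSimplexUnif m h =
      h ^ 2 / ((m + 1) * (m + 2)) * ((∑ k, b k) ^ 2 + ∑ k, b k ^ 2) := by
  simp only [sum_mul_snoc_sub_sum, integral_scaledCornerSimplexUnif_linear_sq hh,
    Fin.sum_univ_castSucc b, Fin.sum_univ_castSucc (fun k => b k ^ 2), sub_sq,
    Finset.sum_add_distrib, Finset.sum_sub_distrib, Finset.sum_const, Finset.card_univ,
    Fintype.card_fin, nsmul_eq_mul, ← Finset.mul_sum, ← Finset.sum_mul]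
  field_simp
  ring

end ScaledCornerSimplex

section SimplexY

variable (a : ℝ → ℝ) {s : ℝ}

lemma simplexYa_succ (m : ℕ) (x : Fin m → ℝ) :
    simplexYa a s (m + 1) x = 1 / (m + 1) *
      ∑ k : Fin (m + 1), a ((k + 1) / (m + 1)) *
        (Fin.snoc x ((m + 1) * s - ∑ i, x i) : Fin (m + 1) → ℝ) k := by
  -- `rfl` retypes the sum over `Fin (m + 1 - 1)` as one over `Fin m`, so that `ring` can match it.
  have hdef : simplexYa a s (m + 1) x = 1 / (m + 1 : ℕ) *
      ((∑ i : Fin m, a ((i + 1) / (m + 1 : ℕ)) * x i) +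
        a ((m + 1 : ℕ) / (m + 1 : ℕ)) * ((m + 1 : ℕ) * s - ∑ i, x i)) := rfl
  rw [hdef, Fin.sum_univ_castSucc]
  simp only [Fin.snoc_castSucc, Fin.snoc_last, Fin.val_castSucc, Fin.val_last]
  push_cast
  ring

lemma integral_simplexYa (hs : 0 < s) {n : ℕ} (hn : n ≠ 0) :
    ∫ x, simplexYa a s n x ∂scaledCornerSimplexUnif (n - 1) (n * s) =
      s / n * ∑ k ∈ Finset.Icc 1 n, a (k / n) := by
  obtain ⟨m, rfl⟩ : ∃ m, n = m + 1 := ⟨n - 1, by omega⟩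
  have hh : (0 : ℝ) < (m + 1) * s := by positivity
  simp only [simplexYa_succ, Nat.add_one_sub_one, integral_const_mul,
    Finset.sum_Icc_one_eq_sum_fin]
  push_cast
  rw [integral_scaledCornerSimplexUnif_sum_mul_snoc hh]
  field_simp

lemma integral_simplexYa_sq (hs : 0 < s) {n : ℕ} (hn : n ≠ 0) :
    ∫ x, simplexYa a s n x ^ 2 ∂scaledCornerSimplexUnif (n - 1) (n * s) =
      s ^ 2 / (n * (n + 1)) *
        ((∑ k ∈ Finset.Icc 1 n, a (k / n)) ^ 2 + ∑ k ∈ Finset.Icc 1 n, a (k / n) ^ 2) := by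
  obtain ⟨m, rfl⟩ : ∃ m, n = m + 1 := ⟨n - 1, by omega⟩
  have hh : (0 : ℝ) < (m + 1) * s := by positivity
  simp only [simplexYa_succ, Nat.add_one_sub_one, mul_pow, integral_const_mul,
    Finset.sum_Icc_one_eq_sum_fin]
  push_cast
  rw [integral_scaledCornerSimplexUnif_sum_mul_snoc_sq hh]
  field_simp
  ring

end SimplexY

section Limits

variable {a : ℝ → ℝ} {s : ℝ}

lemma continuous_simplexYa (n : ℕ) : Continuous (simplexYa a s n) := by
  unfold simplexYa
  fun_prop

lemma tendsto_integral_simplexYa (hs : 0 < s) (ha : ContinuousOn a (Set.Icc 0 1)) :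
    Tendsto (fun n : ℕ => ∫ x, simplexYa a s n x ∂scaledCornerSimplexUnif (n - 1) (n * s)) atTop
      (nhds (s * ∫ t in (0 : ℝ)..1, a t)) := by
  refine ((tendsto_riemannSum_Icc_one ha).const_mul s).congr' ?_
  filter_upwards [eventually_ne_atTop 0] with n hn
  rw [integral_simplexYa a hs hn]
  ring

lemma tendsto_integral_simplexYa_sq (hs : 0 < s) (ha : ContinuousOn a (Set.Icc 0 1)) :
    Tendsto (fun n : ℕ => ∫ x, simplexYa a s n x ^ 2 ∂scaledCornerSimplexUnif (n - 1) (n * s))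
      atTop (nhds ((s * ∫ t in (0 : ℝ)..1, a t) ^ 2)) := by
  have hlim := (((tendsto_natCast_div_add_atTop (1 : ℝ)).mul
    ((tendsto_riemannSum_Icc_one ha).pow 2)).add
      (tendsto_one_div_add_atTop_nhds_zero_nat.mul
        (tendsto_riemannSum_Icc_one (ha.pow 2)))).const_mul (s ^ 2)
  simp only [one_mul, zero_mul, add_zero, ← mul_pow, Pi.pow_apply] at hlim
  refine hlim.congr' ?_
  filter_upwards [eventually_ne_atTop 0] with n hn
  rw [integral_simplexYa_sq a hs hn]
  field_simp

lemma tendsto_variance_simplexYa (hs : 0 < s) (ha : ContinuousOn a (Set.Icc 0 1)) :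
    Tendsto (fun n : ℕ => variance (simplexYa a s n) (scaledCornerSimplexUnif (n - 1) (n * s)))
      atTop (nhds 0) := by
  have hlim := (tendsto_integral_simplexYa_sq hs ha).sub ((tendsto_integral_simplexYa hs ha).pow 2)
  rw [sub_self] at hlim
  refine hlim.congr' ?_
  filter_upwards [eventually_ne_atTop 0] with n hn
  have hh : (0 : ℝ) < n * s := by positivity
  have := isProbabilityMeasure_scaledCornerSimplexUnif (m := n - 1) hh
  rw [variance_eq_sub ((memLp_two_iff_integrable_sq (continuous_simplexYa n).aestronglyMeasurable).2
    (((continuous_simplexYa n).pow 2).integrable_scaledCornerSimplexUnif hh))]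
  rfl

end Limits

/-- Theorem 6.1: with `(x₁,…,x_{n-1})` uniform on `Δ_{ns}`,
`x_n = ns - ∑_{i<n} x_i`, `a` continuous, `a_k = a(k/n)` and
`Y n = (1/n) ∑_{k=1}^n a_k x_k`: `E[Y n] = (s/n) ∑ a_k`,
`E[Y n ^ 2] = (s²/(n(n+1)))((∑ a_k)² + ∑ a_k²)`, hence
`E[Y n] → s ∫_0^1 a`, `E[Y n ^ 2] → (s ∫_0^1 a)²` and `Var (Y n) → 0`. -/
theorem stmt12 (s : ℝ) (hs : 0 < s) (a : ℝ → ℝ) (ha : Continuous a) :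
    (∀ n : ℕ, 3 ≤ n →
      (∫ x, simplexYa a s n x ∂(scaledCornerSimplexUnif (n - 1) (n * s))) =
        (s / n) * ∑ k ∈ Finset.Icc 1 n, a ((k : ℝ) / n) ∧
      (∫ x, (simplexYa a s n x) ^ 2 ∂(scaledCornerSimplexUnif (n - 1) (n * s))) =
        (s ^ 2 / ((n : ℝ) * (n + 1))) *
          ((∑ k ∈ Finset.Icc 1 n, a ((k : ℝ) / n)) ^ 2 +
            ∑ k ∈ Finset.Icc 1 n, a ((k : ℝ) / n) ^ 2)) ∧
    Tendsto
      (fun n : ℕ => ∫ x, simplexYa a s n x ∂(scaledCornerSimplexUnif (n - 1) (n * s)))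
      atTop (nhds (s * ∫ t in (0:ℝ)..1, a t)) ∧
    Tendsto
      (fun n : ℕ =>
        ∫ x, (simplexYa a s n x) ^ 2 ∂(scaledCornerSimplexUnif (n - 1) (n * s)))
      atTop (nhds ((s * ∫ t in (0:ℝ)..1, a t) ^ 2)) ∧
    Tendsto
      (fun n : ℕ => variance (simplexYa a s n) (scaledCornerSimplexUnif (n - 1) (n * s)))
      atTop (nhds 0) :=
  ⟨fun _ hn => ⟨integral_simplexYa a hs (by omega), integral_simplexYa_sq a hs (by omega)⟩,
    tendsto_integral_simplexYa hs ha.continuousOn, tendsto_integral_simplexYa_sq hs ha.continuousOn,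
    tendsto_variance_simplexYa hs ha.continuousOn⟩
end

section
/- Let n ≥ 1 be an integer and p₁,…,p_n > 0 real numbers. Let B⁺ = {x ∈ ℝ^n : x₁² + ⋯ + x_n² ≤ 1 and x_k > 0 for k = 1,…,n}. Then ∫_{B⁺} x₁^{p₁−1}·x₂^{p₂−1}⋯x_n^{p_n−1} dx₁⋯dx_n = (1/2^n)·( Γ(p₁/2)·Γ(p₂/2)⋯Γ(p_n/2) ) / Γ(1 + (p₁+⋯+p_n)/2). -/
/-!
Integrate `∏ xᵢ ^ (pᵢ - 1) · exp (-‖x‖²)` over the positive orthant in two ways. The integrand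
factors over the coordinates, giving `∏ Γ(pᵢ / 2) / 2`. On the other hand, write
`exp (-t) = ∫_{u ≥ t} exp (-u) du` and swap the integrals: with `ν` the measure of density
`∏ xᵢ ^ (pᵢ - 1)` on the orthant, the integral becomes `∫₀^∞ ν {‖x‖² ≤ u} exp (-u) du`. As `ν` is
homogeneous of degree `s = ∑ pᵢ`, `ν {‖x‖² ≤ u} = u ^ (s / 2) · ν(B⁺)`, and the remaining integral
is `Γ(1 + s / 2)`.
-/

open MeasureTheory Real Set Module
open scoped Pointwise

theorem lintegral_rpow_mul_exp_neg_Ioi {s : ℝ} (hs : -1 < s) :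
    ∫⁻ u in Ioi 0, ENNReal.ofReal (u ^ s) * ENNReal.ofReal (exp (-u)) =
      ENNReal.ofReal (Gamma (s + 1)) := by
  have hs' : 0 < s + 1 := by linarith
  have hint := GammaIntegral_convergent hs'
  rw [add_sub_cancel_right] at hint
  rw [Gamma_eq_integral hs', add_sub_cancel_right, ofReal_integral_eq_lintegral_ofReal hint
      (ae_restrict_of_forall_mem measurableSet_Ioi fun u hu ↦
        mul_nonneg (exp_pos _).le (rpow_nonneg (le_of_lt hu) _))]
  refine setLIntegral_congr_fun measurableSet_Ioi fun u _ ↦ ?_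
  rw [mul_comm, ENNReal.ofReal_mul (exp_pos _).le]

theorem integrableOn_rpow_sub_one_mul_exp_neg_sq {q : ℝ} (hq : 0 < q) :
    IntegrableOn (fun t : ℝ ↦ t ^ (q - 1) * exp (-t ^ 2)) (Ioi 0) := by
  simpa only [rpow_two] using integrableOn_rpow_mul_exp_neg_rpow (by linarith : -1 < q - 1) two_pos

theorem integral_rpow_sub_one_mul_exp_neg_sq {q : ℝ} (hq : 0 < q) :
    ∫ t in Ioi 0, t ^ (q - 1) * exp (-t ^ 2) = Gamma (q / 2) / 2 := by
  have h := integral_rpow_mul_exp_neg_rpow two_pos (by linarith : -1 < q - 1)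
  simp only [rpow_two, sub_add_cancel] at h
  rw [h, one_div_mul_eq_div]

theorem ofReal_exp_neg_eq_setLIntegral_indicator {t : ℝ} (ht : 0 ≤ t) :
    ENNReal.ofReal (exp (-t)) =
      ∫⁻ u in Ioi 0, (Ici t).indicator (fun u ↦ ENNReal.ofReal (exp (-u))) u := by
  rw [restrict_Ioi_eq_restrict_Ici, lintegral_indicator measurableSet_Ici,
    Measure.restrict_restrict measurableSet_Ici, Ici_inter_Ici, max_eq_left ht,
    ← restrict_Ioi_eq_restrict_Ici,
    ← ofReal_integral_eq_lintegral_ofReal (integrableOn_exp_neg_Ioi t)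
      (Filter.Eventually.of_forall fun _ ↦ (exp_pos _).le), integral_exp_neg_Ioi]

theorem lintegral_ofReal_exp_neg_eq_lintegral_measure_le {α : Type*} [MeasurableSpace α]
    (ν : Measure α) [SFinite ν] {q : α → ℝ} (hq : Measurable q) (hq₀ : ∀ x, 0 ≤ q x) :
    ∫⁻ x, ENNReal.ofReal (exp (-q x)) ∂ν =
      ∫⁻ u in Ioi 0, ν {x | q x ≤ u} * ENNReal.ofReal (exp (-u)) := by
  set e : ℝ → ENNReal := fun u ↦ ENNReal.ofReal (exp (-u))
  have hind : ∀ x u, (Ici (q x)).indicator e u = {x | q x ≤ u}.indicator (fun _ ↦ e u) x := by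
    intro x u
    simp only [indicator_apply, mem_Ici, mem_ofPred_eq]
  calc ∫⁻ x, e (q x) ∂ν
      = ∫⁻ x, (∫⁻ u in Ioi 0, {x | q x ≤ u}.indicator (fun _ ↦ e u) x) ∂ν := by
        simp_rw [← hind, e, ← ofReal_exp_neg_eq_setLIntegral_indicator (hq₀ _)]
    _ = ∫⁻ u in Ioi 0, (∫⁻ x, {x | q x ≤ u}.indicator (fun _ ↦ e u) x ∂ν) :=
        lintegral_lintegral_swap <| Measurable.aemeasurable <|
          (Measurable.ennreal_ofReal (by fun_prop)).indicator
            (measurableSet_le (hq.comp measurable_fst) measurable_snd)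
    _ = ∫⁻ u in Ioi 0, ν {x | q x ≤ u} * e u := by
        simp_rw [lintegral_indicator_const (measurableSet_le hq measurable_const), mul_comm]

theorem lintegral_comp_smul_of_pos {E : Type*} [NormedAddCommGroup E] [NormedSpace ℝ E]
    [MeasurableSpace E] [BorelSpace E] [FiniteDimensional ℝ E] (μ : Measure E)
    [μ.IsAddHaarMeasure] (g : E → ENNReal) {r : ℝ} (hr : 0 < r) :
    ∫⁻ x, g (r • x) ∂μ = ENNReal.ofReal ((r ^ finrank ℝ E)⁻¹) * ∫⁻ x, g x ∂μ := by
  have h := lintegral_map_equiv (μ := μ) g (Homeomorph.smul (Units.mk0 r hr.ne')).toMeasurableEquiv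
  rw [← smul_eq_mul, ← lintegral_smul_measure, ← abs_of_pos (inv_pos.2 (pow_pos hr _)),
    ← Measure.map_addHaar_smul μ hr.ne']
  exact h.symm

section Dirichlet

variable {ι : Type*}

variable (ι) in
def positiveOrthant : Set (ι → ℝ) := univ.pi fun _ ↦ Ioi 0

theorem measurableSet_positiveOrthant [Countable ι] : MeasurableSet (positiveOrthant ι) :=
  MeasurableSet.univ_pi fun _ ↦ measurableSet_Ioi

theorem smul_mem_positiveOrthant_iff {r : ℝ} (hr : 0 < r) {x : ι → ℝ} :
    r • x ∈ positiveOrthant ι ↔ x ∈ positiveOrthant ι := by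
  simp [positiveOrthant, mul_pos_iff_of_pos_left hr]

variable [Fintype ι]

theorem volume_restrict_positiveOrthant :
    volume.restrict (positiveOrthant ι) = Measure.pi fun _ ↦ volume.restrict (Ioi 0) := by
  rw [volume_pi, positiveOrthant, Measure.restrict_pi_pi]

theorem prod_rpow_sub_one_smul (p : ι → ℝ) {r : ℝ} (hr : 0 < r) {x : ι → ℝ}
    (hx : ∀ i, 0 ≤ x i) :
    ∏ i, (r • x) i ^ (p i - 1) = r ^ (∑ i, p i - Fintype.card ι) * ∏ i, x i ^ (p i - 1) := by
  simp only [Pi.smul_apply, smul_eq_mul, mul_rpow hr.le (hx _), Finset.prod_mul_distrib,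
    ← rpow_sum_of_pos hr, Finset.sum_sub_distrib, Finset.sum_const, Finset.card_univ, nsmul_one]

theorem setOf_sum_sq_le_eq_smul {u : ℝ} (hu : 0 < u) :
    {x : ι → ℝ | ∑ i, x i ^ 2 ≤ u} = √u • {x | ∑ i, x i ^ 2 ≤ 1} := by
  ext x
  rw [mem_smul_set_iff_inv_smul_mem₀ (sqrt_pos.2 hu).ne']
  simp only [mem_ofPred_eq, Pi.smul_apply, smul_eq_mul, mul_pow, ← Finset.mul_sum, inv_pow,
    sq_sqrt hu.le]
  rw [inv_mul_le_iff₀ hu, mul_one]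

noncomputable def dirichletMeasure (p : ι → ℝ) : Measure (ι → ℝ) :=
  (volume.restrict (positiveOrthant ι)).withDensity fun x ↦ ENNReal.ofReal (∏ i, x i ^ (p i - 1))

instance (p : ι → ℝ) : SFinite (dirichletMeasure p) := by
  unfold dirichletMeasure
  infer_instance

theorem dirichletMeasure_smul (p : ι → ℝ) {r : ℝ} (hr : 0 < r) {S : Set (ι → ℝ)}
    (hS : MeasurableSet S) :
    dirichletMeasure p (r • S) = ENNReal.ofReal (r ^ ∑ i, p i) * dirichletMeasure p S := by
  set F : (ι → ℝ) → ENNReal := fun x ↦ ENNReal.ofReal (∏ i, x i ^ (p i - 1))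
  have hrS : MeasurableSet (r • S) := hS.const_smul₀ r
  have hind : ∀ y, (r • S ∩ positiveOrthant ι).indicator F (r • y) =
      (S ∩ positiveOrthant ι).indicator
        (fun y ↦ ENNReal.ofReal (r ^ (∑ i, p i - Fintype.card ι)) * F y) y := by
    intro y
    by_cases hy : y ∈ S ∩ positiveOrthant ι
    · have hry : r • y ∈ r • S ∩ positiveOrthant ι :=
        ⟨smul_mem_smul_set hy.1, (smul_mem_positiveOrthant_iff hr).2 hy.2⟩
      rw [indicator_of_mem hry, indicator_of_mem hy, ← ENNReal.ofReal_mul (by positivity)]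
      exact congrArg ENNReal.ofReal (prod_rpow_sub_one_smul p hr fun i ↦ (hy.2 i trivial).le)
    · have hry : r • y ∉ r • S ∩ positiveOrthant ι := fun h ↦
        hy ⟨(smul_mem_smul_set_iff₀ hr.ne' S y).1 h.1, (smul_mem_positiveOrthant_iff hr).1 h.2⟩
      rw [indicator_of_notMem hry, indicator_of_notMem hy]
  have hrpow : r ^ Fintype.card ι * r ^ (∑ i, p i - Fintype.card ι) = r ^ ∑ i, p i := by
    rw [← rpow_natCast, ← rpow_add hr, add_sub_cancel]
  calc dirichletMeasure p (r • S)
      = ∫⁻ x, (r • S ∩ positiveOrthant ι).indicator F x := by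
        rw [dirichletMeasure, withDensity_apply _ hrS, Measure.restrict_restrict hrS,
          lintegral_indicator (hrS.inter measurableSet_positiveOrthant)]
    _ = ENNReal.ofReal (r ^ Fintype.card ι) *
          ∫⁻ y, (r • S ∩ positiveOrthant ι).indicator F (r • y) := by
        rw [lintegral_comp_smul_of_pos _ _ hr, finrank_fintype_fun_eq_card, ← mul_assoc,
          ← ENNReal.ofReal_mul (by positivity), mul_inv_cancel₀ (by positivity),
          ENNReal.ofReal_one, one_mul]
    _ = ENNReal.ofReal (r ^ ∑ i, p i) * dirichletMeasure p S := by
        rw [dirichletMeasure, withDensity_apply _ hS, Measure.restrict_restrict hS]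
        simp_rw [hind]
        rw [lintegral_indicator (hS.inter measurableSet_positiveOrthant),
          lintegral_const_mul' _ _ ENNReal.ofReal_ne_top, ← mul_assoc,
          ← ENNReal.ofReal_mul (by positivity), hrpow]

theorem lintegral_exp_neg_sum_sq_dirichletMeasure {p : ι → ℝ} (hp : ∀ i, 0 < p i) :
    ∫⁻ x, ENNReal.ofReal (exp (-∑ i, x i ^ 2)) ∂dirichletMeasure p =
      ∏ i, ENNReal.ofReal (Gamma (p i / 2) / 2) := by
  set g : ι → ℝ → ℝ := fun i t ↦ t ^ (p i - 1) * exp (-t ^ 2)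
  have hsplit : ∀ x : ι → ℝ,
      (∏ i, x i ^ (p i - 1)) * exp (-∑ i, x i ^ 2) = ∏ i, g i (x i) := by
    intro x
    rw [← Finset.sum_neg_distrib, exp_sum, ← Finset.prod_mul_distrib]
  have hint : Integrable (fun x : ι → ℝ ↦ ∏ i, g i (x i))
      (volume.restrict (positiveOrthant ι)) := by
    rw [volume_restrict_positiveOrthant]
    exact Integrable.fintype_prod fun i ↦ integrableOn_rpow_sub_one_mul_exp_neg_sq (hp i)
  have hnonneg : ∀ᵐ x ∂volume.restrict (positiveOrthant ι), 0 ≤ ∏ i, g i (x i) :=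
    ae_restrict_of_forall_mem measurableSet_positiveOrthant fun x hx ↦
      Finset.prod_nonneg fun i _ ↦ mul_nonneg (rpow_nonneg (hx i trivial).le _) (exp_pos _).le
  rw [dirichletMeasure, lintegral_withDensity_eq_lintegral_mul _ (by fun_prop) (by fun_prop)]
  simp_rw [Pi.mul_apply, ← ENNReal.ofReal_mul' (exp_pos _).le, hsplit]
  rw [← ofReal_integral_eq_lintegral_ofReal hint hnonneg, volume_restrict_positiveOrthant,
    integral_fintype_prod_eq_prod, ENNReal.ofReal_prod_of_nonneg]
  · simp_rw [g, integral_rpow_sub_one_mul_exp_neg_sq (hp _)]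
  · exact fun i _ ↦ setIntegral_nonneg measurableSet_Ioi fun t ht ↦
      mul_nonneg (rpow_nonneg (le_of_lt ht) _) (exp_pos _).le

theorem dirichletMeasure_sum_sq_le_one_mul_Gamma {p : ι → ℝ} (hp : ∀ i, 0 < p i) :
    dirichletMeasure p {x | ∑ i, x i ^ 2 ≤ 1} * ENNReal.ofReal (Gamma (1 + (∑ i, p i) / 2)) =
      ∏ i, ENNReal.ofReal (Gamma (p i / 2) / 2) := by
  have hs : 0 ≤ ∑ i, p i := Finset.sum_nonneg fun i _ ↦ (hp i).le
  have hball : MeasurableSet {x : ι → ℝ | ∑ i, x i ^ 2 ≤ 1} :=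
    measurableSet_le (by fun_prop) measurable_const
  calc dirichletMeasure p {x | ∑ i, x i ^ 2 ≤ 1} * ENNReal.ofReal (Gamma (1 + (∑ i, p i) / 2))
      = ∫⁻ u in Ioi 0, dirichletMeasure p {x | ∑ i, x i ^ 2 ≤ 1} *
          (ENNReal.ofReal (u ^ ((∑ i, p i) / 2)) * ENNReal.ofReal (exp (-u))) := by
        rw [lintegral_const_mul _ (by fun_prop), lintegral_rpow_mul_exp_neg_Ioi (by linarith),
          add_comm]
    _ = ∫⁻ u in Ioi 0, dirichletMeasure p {x | ∑ i, x i ^ 2 ≤ u} * ENNReal.ofReal (exp (-u)) := by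
        refine setLIntegral_congr_fun measurableSet_Ioi fun u hu ↦ ?_
        rw [setOf_sum_sq_le_eq_smul hu, dirichletMeasure_smul p (sqrt_pos.2 hu) hball,
          sqrt_eq_rpow, ← rpow_mul hu.le, one_div_mul_eq_div, mul_assoc, mul_left_comm]
    _ = ∫⁻ x, ENNReal.ofReal (exp (-∑ i, x i ^ 2)) ∂dirichletMeasure p :=
        (lintegral_ofReal_exp_neg_eq_lintegral_measure_le _ (by fun_prop)
          fun x ↦ by positivity).symm
    _ = ∏ i, ENNReal.ofReal (Gamma (p i / 2) / 2) := lintegral_exp_neg_sum_sq_dirichletMeasure hp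

theorem integral_prod_rpow_sub_one_positiveBall {p : ι → ℝ} (hp : ∀ i, 0 < p i) :
    ∫ x in {x : ι → ℝ | (∑ i, x i ^ 2 ≤ 1) ∧ ∀ k, 0 < x k}, ∏ i, x i ^ (p i - 1) =
      (∏ i, Gamma (p i / 2) / 2) / Gamma (1 + (∑ i, p i) / 2) := by
  have hball : MeasurableSet {x : ι → ℝ | ∑ i, x i ^ 2 ≤ 1} :=
    measurableSet_le (by fun_prop) measurable_const
  have hB : {x : ι → ℝ | (∑ i, x i ^ 2 ≤ 1) ∧ ∀ k, 0 < x k} =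
      {x | ∑ i, x i ^ 2 ≤ 1} ∩ positiveOrthant ι := by
    ext x
    simp [positiveOrthant]
  have hs : 0 ≤ ∑ i, p i := Finset.sum_nonneg fun i _ ↦ (hp i).le
  have hΓ : 0 < Gamma (1 + (∑ i, p i) / 2) := Gamma_pos_of_pos (by linarith)
  have hΓi : ∀ i ∈ Finset.univ, 0 ≤ Gamma (p i / 2) / 2 := fun i _ ↦
    div_nonneg (Gamma_pos_of_pos (half_pos (hp i))).le zero_le_two
  have key := congrArg ENNReal.toReal (dirichletMeasure_sum_sq_le_one_mul_Gamma hp)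
  rw [ENNReal.toReal_mul, ENNReal.toReal_ofReal hΓ.le, ← ENNReal.ofReal_prod_of_nonneg hΓi,
    ENNReal.toReal_ofReal (Finset.prod_nonneg hΓi)] at key
  rw [integral_eq_lintegral_of_nonneg_ae
      (ae_restrict_of_forall_mem (hB ▸ hball.inter measurableSet_positiveOrthant) fun x hx ↦
        Finset.prod_nonneg fun i _ ↦ rpow_nonneg (hx.2 i).le _)
      (Finset.measurable_prod _ fun i _ ↦ by fun_prop).aestronglyMeasurable,
    eq_div_iff hΓ.ne', ← key, dirichletMeasure, withDensity_apply _ hball,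
    Measure.restrict_restrict hball, hB]

end Dirichlet

theorem stmt13_general (n : ℕ) (p : Fin n → ℝ) (hp : ∀ i, 0 < p i)
    (Bplus : Set (Fin n → ℝ))
    (hB : Bplus = {x | (∑ i, (x i) ^ 2 ≤ 1) ∧ ∀ k, 0 < x k}) :
    (∫ x in Bplus, ∏ i, (x i) ^ (p i - 1)) =
      (1 / 2 ^ n) * (∏ i, Real.Gamma (p i / 2)) /
        Real.Gamma (1 + (∑ i, p i) / 2) := by
  rw [hB, integral_prod_rpow_sub_one_positiveBall hp, Finset.prod_div_distrib,
    Finset.prod_const, Finset.card_univ, Fintype.card_fin]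
  ring

/-- generalized Dirichlet formula, Lemma 8.1:
`∫_{B⁺} x₁^{p₁-1} ⋯ x_n^{p_n-1} dx = (1/2ⁿ) Γ(p₁/2)⋯Γ(p_n/2) / Γ(1 + (p₁+⋯+p_n)/2)`,
where `B⁺` is the positive part of the closed unit Euclidean ball in `ℝⁿ`. -/
theorem stmt13 (n : ℕ) (hn : 1 ≤ n) (p : Fin n → ℝ) (hp : ∀ i, 0 < p i)
    (Bplus : Set (Fin n → ℝ))
    (hB : Bplus = {x | (∑ i, (x i) ^ 2 ≤ 1) ∧ ∀ k, 0 < x k}) :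
    (∫ x in Bplus, ∏ i, (x i) ^ (p i - 1)) =
      (1 / 2 ^ n) * (∏ i, Real.Gamma (p i / 2)) /
        Real.Gamma (1 + (∑ i, p i) / 2) :=
  stmt13_general n p hp Bplus hB
end

section
/- Fix R > 0 and x ∈ ℝ. Then lim_{n→∞} ( Γ(1 + n/2) / ( √π · Γ((n+1)/2) ) ) · (nR² − x²)^{(n−1)/2} / (nR²)^{n/2} = (1/(R·√(2π)))·exp(−x²/(2R²)), where for each n the expression (nR² − x²)^{(n−1)/2} is understood to be 0 when x² > nR². -/
/-!
Log-convexity of `Γ` on `[t, t + 1]` gives `Γ(t + 1/2) ≤ √t Γ(t)`, which squeezes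
`Γ(s + 1) / Γ(s + 1/2)` between `√s` and `√(s + 1/2)`; hence the normalising constant is
`√(n / 2π) (1 + o(1))`. Factoring `nR²` out of `nR² - x²` leaves `(nR²)^{-1/2}` times
`(1 - x²/(nR²))^{(n-1)/2} → exp(-x²/(2R²))`.
-/

open Filter Real Topology

namespace Real

theorem Gamma_add_half_le_sqrt_mul_Gamma {t : ℝ} (ht : 0 < t) :
    Gamma (t + 1 / 2) ≤ √t * Gamma t := by
  have hconv := Gamma_mul_add_mul_le_rpow_Gamma_mul_rpow_Gamma ht (by linarith : 0 < t + 1)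
    one_half_pos one_half_pos (by norm_num)
  rw [show 1 / 2 * t + 1 / 2 * (t + 1) = t + 1 / 2 by ring, Gamma_add_one ht.ne',
    mul_rpow ht.le (Gamma_pos_of_pos ht).le, ← sqrt_eq_rpow, ← sqrt_eq_rpow] at hconv
  calc Gamma (t + 1 / 2) ≤ √(Gamma t) * (√t * √(Gamma t)) := hconv
    _ = √t * Gamma t := by rw [mul_left_comm, mul_self_sqrt (Gamma_pos_of_pos ht).le]

theorem sqrt_mul_Gamma_add_half_le_Gamma_add_one {s : ℝ} (hs : 0 < s) :
    √s * Gamma (s + 1 / 2) ≤ Gamma (s + 1) := by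
  calc √s * Gamma (s + 1 / 2) ≤ √s * (√s * Gamma s) := by
        gcongr; exact Gamma_add_half_le_sqrt_mul_Gamma hs
    _ = Gamma (s + 1) := by rw [← mul_assoc, mul_self_sqrt hs.le, Gamma_add_one hs.ne']

theorem Gamma_add_one_le_sqrt_mul_Gamma_add_half {s : ℝ} (hs : -(1 / 2) < s) :
    Gamma (s + 1) ≤ √(s + 1 / 2) * Gamma (s + 1 / 2) := by
  have h := Gamma_add_half_le_sqrt_mul_Gamma (t := s + 1 / 2) (by linarith)
  rwa [add_assoc, add_halves] at h

theorem tendsto_Gamma_add_one_div_sqrt_mul_Gamma_add_half :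
    Tendsto (fun s => Gamma (s + 1) / (√s * Gamma (s + 1 / 2))) atTop (𝓝 1) := by
  have hupper : Tendsto (fun s : ℝ => √(1 + (1 / 2) / s)) atTop (𝓝 1) := by
    simpa using
      (((tendsto_const_nhds (x := (1 / 2 : ℝ))).div_atTop tendsto_id).const_add 1).sqrt
  have hden : ∀ s : ℝ, 0 < s → 0 < √s * Gamma (s + 1 / 2) := fun s hs => by
    have := Gamma_pos_of_pos (by linarith : 0 < s + 1 / 2); positivity
  refine tendsto_of_tendsto_of_tendsto_of_le_of_le' tendsto_const_nhds hupper ?_ ?_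
    <;> filter_upwards [eventually_gt_atTop 0] with s hs
  · rw [le_div_iff₀ (hden s hs), one_mul]
    exact sqrt_mul_Gamma_add_half_le_Gamma_add_one hs
  · rw [div_le_iff₀ (hden s hs)]
    calc Gamma (s + 1) ≤ √(s + 1 / 2) * Gamma (s + 1 / 2) :=
          Gamma_add_one_le_sqrt_mul_Gamma_add_half (by linarith)
      _ = √(1 + (1 / 2) / s) * (√s * Gamma (s + 1 / 2)) := by
          rw [← mul_assoc, ← sqrt_mul (by positivity), add_mul, div_mul_cancel₀ _ hs.ne',
            one_mul]

theorem tendsto_one_add_div_rpow_mul_add (a b c : ℝ) :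
    Tendsto (fun y => (1 + a / y) ^ (y * b + c)) atTop (𝓝 (exp (a * b))) := by
  have hbase : Tendsto (fun y => 1 + a / y) atTop (𝓝 1) := by
    simpa using ((tendsto_const_nhds (x := a)).div_atTop tendsto_id).const_add 1
  have hlog : Tendsto (fun y => log (1 + a / y)) atTop (𝓝 0) := by
    rw [← log_one]
    exact (continuousAt_log one_ne_zero).tendsto.comp hbase
  have hexponent : Tendsto (fun y => log (1 + a / y) * (y * b + c)) atTop (𝓝 (a * b)) := by
    have := ((tendsto_mul_log_one_add_div_atTop a).mul_const b).add (hlog.const_mul c)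
    simp only [mul_zero, add_zero] at this
    exact this.congr fun y => by ring
  refine ((continuous_exp.tendsto _).comp hexponent).congr' ?_
  filter_upwards [hbase.eventually (lt_mem_nhds one_pos)] with y hy
  rw [rpow_def_of_pos hy, Function.comp_apply]

end Real

noncomputable def uniformBallMarginalDensity (n : ℕ) (R x : ℝ) : ℝ :=
  if x ^ 2 ≤ n * R ^ 2 then
    (Gamma (1 + (n : ℝ) / 2) / (√π * Gamma (((n : ℝ) + 1) / 2))) *
      ((n * R ^ 2 - x ^ 2) ^ (((n : ℝ) - 1) / 2)) / ((n * R ^ 2 : ℝ) ^ ((n : ℝ) / 2))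
  else 0

theorem uniformBallMarginalDensity_eq_of_sq_le {n : ℕ} {R x : ℝ} (hn : 0 < n) (hR : 0 < R)
    (hx : x ^ 2 ≤ n * R ^ 2) :
    uniformBallMarginalDensity n R x =
      Gamma ((n : ℝ) / 2 + 1) / (√((n : ℝ) / 2) * Gamma ((n : ℝ) / 2 + 1 / 2)) *
        (1 / (R * √(2 * π))) * (1 + -x ^ 2 / R ^ 2 / n) ^ ((n : ℝ) * (1 / 2) + -(1 / 2)) := by
  have hn' : (0 : ℝ) < n := Nat.cast_pos.mpr hn
  have hN : (0 : ℝ) < n * R ^ 2 := by positivity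
  have hfactor : (n : ℝ) * R ^ 2 - x ^ 2 = n * R ^ 2 * (1 + -x ^ 2 / R ^ 2 / n) := by
    field_simp; ring
  have hbase : 0 ≤ 1 + -x ^ 2 / R ^ 2 / n := by
    rw [← mul_nonneg_iff_of_pos_left hN, ← hfactor]; linarith
  have hscale : ((n : ℝ) * R ^ 2) ^ (((n : ℝ) - 1) / 2) / ((n : ℝ) * R ^ 2) ^ ((n : ℝ) / 2)
      = 1 / (√n * R) := by
    rw [← rpow_sub hN, show ((n : ℝ) - 1) / 2 - n / 2 = -(1 / 2) by ring, rpow_neg hN.le,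
      ← sqrt_eq_rpow, sqrt_mul hn'.le, sqrt_sq hR.le, one_div]
  rw [uniformBallMarginalDensity, if_pos hx, hfactor, mul_rpow hN.le hbase, mul_div_assoc,
    mul_div_right_comm, hscale, add_comm 1, show ((n : ℝ) + 1) / 2 = n / 2 + 1 / 2 by ring,
    show ((n : ℝ) - 1) / 2 = n * (1 / 2) + -(1 / 2) by ring, sqrt_div hn'.le,
    sqrt_mul zero_le_two]
  have hGamma := Gamma_pos_of_pos (by positivity : (0 : ℝ) < n / 2 + 1 / 2)
  field_simp

/-- formulas (8.37)–(8.38): the marginal density at `x` of one coordinate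
of a uniform point on the ball of radius `√n R` in `ℝⁿ` converges pointwise to the
Gaussian density `(1/(R√(2π))) exp(-x²/(2R²))`; the power `(nR² - x²)^{(n-1)/2}` is
understood to be `0` when `x² > nR²`. -/
theorem stmt16 (R : ℝ) (hR : 0 < R) (x : ℝ) :
    Tendsto
      (fun n : ℕ =>
        if x ^ 2 ≤ n * R ^ 2 then
          (Real.Gamma (1 + (n : ℝ) / 2) / (Real.sqrt π * Real.Gamma (((n : ℝ) + 1) / 2))) *
            ((n * R ^ 2 - x ^ 2) ^ (((n : ℝ) - 1) / 2)) / ((n * R ^ 2 : ℝ) ^ ((n : ℝ) / 2))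
        else 0)
      atTop
      (nhds (1 / (R * Real.sqrt (2 * π)) * Real.exp (-x ^ 2 / (2 * R ^ 2)))) := by
  change Tendsto (fun n => uniformBallMarginalDensity n R x) _ _
  have hGamma := tendsto_Gamma_add_one_div_sqrt_mul_Gamma_add_half.comp
    (tendsto_natCast_atTop_atTop.atTop_div_const two_pos)
  have hpow := (tendsto_one_add_div_rpow_mul_add (-x ^ 2 / R ^ 2) (1 / 2) (-(1 / 2))).comp
    tendsto_natCast_atTop_atTop
  have hlim := (hGamma.mul_const (1 / (R * √(2 * π)))).mul hpow
  rw [one_mul, show -x ^ 2 / R ^ 2 * (1 / 2) = -x ^ 2 / (2 * R ^ 2) by ring] at hlim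
  refine hlim.congr' ?_
  have hinside := (tendsto_natCast_atTop_atTop.atTop_mul_const (pow_pos hR 2)).eventually_ge_atTop
    (x ^ 2)
  filter_upwards [hinside, eventually_gt_atTop 0] with n hx hn
  exact (uniformBallMarginalDensity_eq_of_sq_le hn hR hx).symm
end

section
/- Let (a_k)_{k≥0} be a sequence of real numbers with a₀ = 1 satisfying, for every integer k ≥ 0, the relation 2^k·a_k = ∑_{i=0}^k a_i·a_{k−i}. Then a_k = a₁^k / k! for all k ≥ 0. -/
/-!
Writing `φ(t) = ∑ a_k t^k`, the recursion says `φ(2t) = φ(t)²`. The series `e^{ct}`, with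
coefficients `c^k / k!`, solves it, and a solution is determined by `a₀ = 1` and `a₁`: the
coefficient of `t^k` in `φ(t)²` is `2 a₀ a_k` plus terms involving only `a₁, …, a_{k-1}`, and
`2^k ≠ 2` for `k ≥ 2`.
-/

open Finset PowerSeries

/-- `2^k a_k` is the coefficient of `t^k` in `φ(2t)`, the antidiagonal sum that in `φ(t)²`. -/
def SatisfiesDuplication {R : Type*} [CommSemiring R] (a : ℕ → R) : Prop :=
  ∀ k, 2 ^ k * a k = ∑ p ∈ antidiagonal k, a p.1 * a p.2

theorem Finset.Nat.sum_antidiagonal_add_two {M : Type*} [AddCommMonoid M] (f : ℕ × ℕ → M)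
    (n : ℕ) :
    ∑ p ∈ antidiagonal (n + 2), f p =
      f (0, n + 2) + f (n + 2, 0) + ∑ p ∈ antidiagonal n, f (p.1 + 1, p.2 + 1) := by
  rw [Nat.sum_antidiagonal_succ, Nat.sum_antidiagonal_succ', ← add_assoc]

theorem satisfiesDuplication_pow_div_factorial {K : Type*} [Field K] [CharZero K] (c : K) :
    SatisfiesDuplication fun k ↦ c ^ k / (k.factorial : K) := by
  intro k
  have h := congrArg (coeff k) (exp_mul_exp_eq_exp_add (A := K) c c)
  simp only [coeff_mul, coeff_rescale, coeff_exp, one_div, map_inv₀, map_natCast] at h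
  simp only [div_eq_mul_inv, h, ← two_mul, mul_pow]
  ring

theorem SatisfiesDuplication.eq_of_apply_one_eq {R : Type*} [CommRing R] [IsDomain R]
    [CharZero R] {a b : ℕ → R} (ha : SatisfiesDuplication a) (hb : SatisfiesDuplication b)
    (ha0 : a 0 = 1) (hb0 : b 0 = 1) (h1 : a 1 = b 1) : a = b := by
  funext k
  induction k using Nat.strong_induction_on with
  | _ k ih =>
    match k with
    | 0 => rw [ha0, hb0]
    | 1 => exact h1
    | n + 2 =>
      have hinner : ∑ p ∈ antidiagonal n, a (p.1 + 1) * a (p.2 + 1) =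
          ∑ p ∈ antidiagonal n, b (p.1 + 1) * b (p.2 + 1) := by
        refine sum_congr rfl fun p hp ↦ ?_
        rw [HasAntidiagonal.mem_antidiagonal] at hp
        rw [ih (p.1 + 1) (by omega), ih (p.2 + 1) (by omega)]
      have ha' := ha (n + 2)
      have hb' := hb (n + 2)
      rw [Nat.sum_antidiagonal_add_two (fun p ↦ a p.1 * a p.2), ha0] at ha'
      rw [Nat.sum_antidiagonal_add_two (fun p ↦ b p.1 * b p.2), hb0, ← hinner] at hb'
      have hne : (2 : R) ^ (n + 2) - 2 ≠ 0 := by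
        rw [sub_ne_zero]
        exact_mod_cast (Nat.pow_lt_pow_right (by norm_num) (by omega : 1 < n + 2)).ne'
      exact mul_left_cancel₀ hne (by linear_combination ha' - hb')

/-- Section 9.1: if `a₀ = 1` and `2ᵏ a_k = ∑_{i=0}^k a_i a_{k-i}` for all
`k ≥ 0`, then `a_k = a₁ᵏ / k!`. -/
theorem stmt17 (a : ℕ → ℝ) (h0 : a 0 = 1)
    (hrec : ∀ k : ℕ, (2 : ℝ) ^ k * a k = ∑ i ∈ Finset.range (k + 1), a i * a (k - i)) :
    ∀ k : ℕ, a k = a 1 ^ k / (Nat.factorial k : ℝ) := by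
  have ha : SatisfiesDuplication a := fun k ↦ by
    rw [hrec k, Nat.sum_antidiagonal_eq_sum_range_succ (fun i j ↦ a i * a j)]
  exact congrFun
    (ha.eq_of_apply_one_eq (satisfiesDuplication_pow_div_factorial (a 1)) h0 (by simp) (by simp))
end
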